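/- arXiv:1806.01703 — 5 statements merged into one kernel-verified Lean document; each statement's English description precedes it below -/
import Mathlib

section
/- Every finite potential game possesses at least one pure Nash equilibrium. -/
/-- Every finite potential game possesses at least one pure Nash equilibrium. -/
theorem stmt_6 {N : Type*} [Fintype N] [DecidableEq N] (H : N → Type*)
    [∀ i, Fintype (H i)] [∀ i, Nonempty (H i)]
    (π : ∀ _ : N, (∀ j, H j) → ℝ) (Φ : (∀ j, H j) → ℝ)
    (hpot : ∀ (h : ∀ j, H j) (i : N) (h' : H i),
      Φ (Function.update h i h') - Φ h = π i (Function.update h i h') - π i h) :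
    ∃ h : ∀ j, H j, ∀ (i : N) (h' : H i),
      ¬ π i h < π i (Function.update h i h') := by
  obtain ⟨h, hmax⟩ := Finite.exists_max Φ
  refine ⟨h, fun i h' hlt => ?_⟩
  have := hpot h i h'
  have := hmax (Function.update h i h')
  linarith
end

section
/- Consider N players and a finite sample S = (z₁,…,z_m) with z_j = (x_j, y_j, t_j). For a strategy profile h = (h₁,…,h_N) of functions h_i : X → ℝ, define I(z, g) = 1 if |g(x) − y| ≤ t and 0 otherwise, let n(z; h) = ∑_{i'=1}^N I(z, h_{i'}), and let w_i(z; h) = I(z, h_i)/n(z; h) when n(z; h) > 0 and 0 otherwise. Define the empirical payoff π_i^S(h) = (1/m)∑_j w_i(z_j; h) and Φ(h) = (1/m)∑_{j=1}^m ∑_{k=1}^{n(z_j; h)} 1/k. Then for every player i, every profile h, and every alternative strategy h_i', π_i^S(h) − π_i^S(h_i', h_{−i}) = Φ(h) − Φ(h_i', h_{−i}); i.e., the empirical game is an exact potential game. -/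
open Classical in
/-- Satisfaction indicator: `1` if `|g x - y| ≤ t`, `0` otherwise. -/
noncomputable def satInd {X : Type*} (g : X → ℝ) (z : X × ℝ × ℝ) : ℝ :=
  if |g z.1 - z.2.1| ≤ z.2.2 then 1 else 0

/-- Number of players satisfying user `z` under profile `h`. -/
noncomputable def nSat {X : Type*} {ι : Type*} [Fintype ι]
    (h : ι → X → ℝ) (z : X × ℝ × ℝ) : ℝ :=
  ∑ i, satInd (h i) z

open Classical in
/-- Expected share of player `i` from user `z` under profile `h`. -/
noncomputable def share {X : Type*} {ι : Type*} [Fintype ι]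
    (h : ι → X → ℝ) (i : ι) (z : X × ℝ × ℝ) : ℝ :=
  if nSat h z = 0 then 0 else satInd (h i) z / nSat h z

/-- Empirical payoff of player `i` on sample `z` under profile `h`. -/
noncomputable def empPayoff {X : Type*} {ι : Type*} [Fintype ι] {m : ℕ}
    (z : Fin m → X × ℝ × ℝ) (i : ι) (h : ι → X → ℝ) : ℝ :=
  (1 / m) * ∑ j, share h i (z j)

/-- Rosenthal-style potential of the empirical game. -/
noncomputable def empPotential {X : Type*} {ι : Type*} [Fintype ι] {m : ℕ}
    (z : Fin m → X × ℝ × ℝ) (h : ι → X → ℝ) : ℝ :=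
  (1 / m) * ∑ j, ∑ k ∈ Finset.Icc 1 ⌊nSat h (z j)⌋₊, (1 : ℝ) / k

open Classical

/-- natural count of satisfied players -/
noncomputable def cSat {X : Type*} {ι : Type*} [Fintype ι]
    (h : ι → X → ℝ) (w : X × ℝ × ℝ) : ℕ :=
  (Finset.univ.filter (fun i' => |h i' w.1 - w.2.1| ≤ w.2.2)).card

lemma nSat_eq_cSat {X : Type*} {ι : Type*} [Fintype ι]
    (h : ι → X → ℝ) (w : X × ℝ × ℝ) : nSat h w = (cSat h w : ℝ) := by
  simp [nSat, satInd, cSat, Finset.sum_boole]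

lemma harm_succ (n : ℕ) :
    ∑ k ∈ Finset.Icc 1 (n+1), (1 : ℝ) / k
      = (∑ k ∈ Finset.Icc 1 n, (1 : ℝ) / k) + 1 / (n+1) := by
  rw [Finset.sum_Icc_succ_top (Nat.le_add_left 1 n)]
  push_cast; ring

lemma key {X : Type*} {ι : Type*} [Fintype ι] [DecidableEq ι]
    (w : X × ℝ × ℝ) (i : ι) (h : ι → X → ℝ) (h' : X → ℝ) :
    share h i w - share (Function.update h i h') i w =
      (∑ k ∈ Finset.Icc 1 ⌊nSat h w⌋₊, (1 : ℝ) / k)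
        - ∑ k ∈ Finset.Icc 1 ⌊nSat (Function.update h i h') w⌋₊, (1 : ℝ) / k := by
  set g := Function.update h i h' with hg
  set s : Finset ι := Finset.univ.filter (fun i' => |h i' w.1 - w.2.1| ≤ w.2.2) with hs
  set s' : Finset ι := Finset.univ.filter (fun i' => |g i' w.1 - w.2.1| ≤ w.2.2) with hs'
  have herase : s.erase i = s'.erase i := by
    ext a
    simp only [hs, hs', Finset.mem_erase, Finset.mem_filter, Finset.mem_univ, true_and]
    constructor <;> rintro ⟨ha, hb⟩ <;>
      exact ⟨ha, by simpa [hg, Function.update_of_ne ha] using hb⟩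
  have hcs : cSat h w = s.card := rfl
  have hcs' : cSat g w = s'.card := rfl
  have hn : nSat h w = (s.card : ℝ) := by rw [nSat_eq_cSat, hcs]
  have hn' : nSat g w = (s'.card : ℝ) := by rw [nSat_eq_cSat, hcs']
  have hfloor : ⌊nSat h w⌋₊ = s.card := by rw [hn]; exact Nat.floor_natCast _
  have hfloor' : ⌊nSat g w⌋₊ = s'.card := by rw [hn']; exact Nat.floor_natCast _
  have hsat : satInd (h i) w = if i ∈ s then 1 else 0 := by
    simp [satInd, hs]
  have hsat' : satInd (g i) w = if i ∈ s' then 1 else 0 := by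
    simp [satInd, hs']
  rw [hfloor, hfloor']
  by_cases hi : i ∈ s <;> by_cases hi' : i ∈ s'
  · -- both: s = s'
    have : s = s' := by
      ext a
      by_cases ha : a = i
      · subst ha; simp [hi, hi']
      · constructor <;> intro hmem <;>
          [exact Finset.mem_of_mem_erase (herase ▸ Finset.mem_erase.2 ⟨ha, hmem⟩);
           exact Finset.mem_of_mem_erase (herase ▸ Finset.mem_erase.2 ⟨ha, hmem⟩)]
    simp [share, this, hn, hn', hsat, hsat', hi, hi']
  · -- i ∈ s, i ∉ s' : s = insert i s'
    have hins : s = insert i s' := by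
      ext a
      by_cases ha : a = i
      · subst ha; simp [hi]
      · simp only [Finset.mem_insert, ha, false_or]
        constructor <;> intro hmem <;>
          [exact Finset.mem_of_mem_erase (herase ▸ Finset.mem_erase.2 ⟨ha, hmem⟩);
           exact Finset.mem_of_mem_erase (herase ▸ Finset.mem_erase.2 ⟨ha, hmem⟩)]
    have hcard : s.card = s'.card + 1 := by
      rw [hins, Finset.card_insert_of_notMem hi']
    have hpos : s.card ≠ 0 := Finset.card_ne_zero_of_mem hi
    have hnz : nSat h w ≠ 0 := by
      rw [hn]; exact_mod_cast hpos
    have hshare : share h i w = 1 / (s.card : ℝ) := by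
      unfold share; rw [if_neg hnz, hsat, if_pos hi, hn]
    have hshare' : share g i w = 0 := by
      simp [share, hsat', hi']
    rw [hshare, hshare', hcard, harm_succ]
    push_cast; ring
  · -- i ∉ s, i ∈ s' : s' = insert i s
    have hins : s' = insert i s := by
      ext a
      by_cases ha : a = i
      · subst ha; simp [hi']
      · simp only [Finset.mem_insert, ha, false_or]
        constructor <;> intro hmem <;>
          [exact Finset.mem_of_mem_erase (herase ▸ Finset.mem_erase.2 ⟨ha, hmem⟩);
           exact Finset.mem_of_mem_erase (herase ▸ Finset.mem_erase.2 ⟨ha, hmem⟩)]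
    have hcard : s'.card = s.card + 1 := by
      rw [hins, Finset.card_insert_of_notMem hi]
    have hpos : s'.card ≠ 0 := Finset.card_ne_zero_of_mem hi'
    have hnz : nSat g w ≠ 0 := by
      rw [hn']; exact_mod_cast hpos
    have hshare : share h i w = 0 := by
      simp [share, hsat, hi]
    have hshare' : share g i w = 1 / (s'.card : ℝ) := by
      unfold share; rw [if_neg hnz, hsat', if_pos hi', hn']
    rw [hshare, hshare', hcard, harm_succ]
    push_cast; ring
  · -- neither
    have : s = s' := by
      ext a
      by_cases ha : a = i
      · subst ha; simp [hi, hi']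
      · constructor <;> intro hmem <;>
          [exact Finset.mem_of_mem_erase (herase ▸ Finset.mem_erase.2 ⟨ha, hmem⟩);
           exact Finset.mem_of_mem_erase (herase ▸ Finset.mem_erase.2 ⟨ha, hmem⟩)]
    simp [share, this, hsat, hsat', hi, hi']

/-- The empirical game is an exact potential game. -/
theorem stmt_8 {X : Type*} {ι : Type*} [Fintype ι] [DecidableEq ι] {m : ℕ}
    (z : Fin m → X × ℝ × ℝ) (ht : ∀ j, 0 ≤ (z j).2.2)
    (i : ι) (h : ι → X → ℝ) (h' : X → ℝ) :
    empPayoff z i h - empPayoff z i (Function.update h i h') =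
      empPotential z h - empPotential z (Function.update h i h') := by
  unfold empPayoff empPotential
  rw [← mul_sub, ← mul_sub, ← Finset.sum_sub_distrib, ← Finset.sum_sub_distrib]
  congr 1
  exact Finset.sum_congr rfl fun j _ => key (z j) i h h'
end

section
/- Every empirical game (N players with arbitrary strategy spaces of functions, uniform distribution over a finite sample, payoffs w_i as defined via the satisfaction indicator) possesses at least one pure Nash equilibrium, provided the set of distinct payoff-relevant behaviors on the sample is finite (e.g., when each restricted indicator class is finite). -/
/-!
The empirical game is an exact potential game. At a sample point satisfied by `n` players,
each of them receives `1/n`, which is the increment `H_n - H_{n-1}` of the harmonic numbers;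
so a player's payoff is `Φ - Ψ_i`, where `Φ = (1/m) ∑_j H_{n(z_j)}` and `Ψ_i` is the same sum
over the other players only. A unilateral deviation therefore changes the deviator's payoff
exactly as it changes `Φ`. Since `Φ` depends on a strategy profile only through the indicator
vectors of its strategies on the sample, and these range over a finite set, `Φ` attains a
maximum on the profile space, and any maximizer is a pure Nash equilibrium.
-/

open Finset Function

theorem exists_forall_comp_le_of_finite_image {ι S B β : Type*} [Finite ι] [LinearOrder β]
    (f : S → B) (H : ι → Set S) (hne : ∀ i, (H i).Nonempty) (hfin : ∀ i, (f '' H i).Finite)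
    (Φ : (ι → B) → β) :
    ∃ h : ι → S, (∀ i, h i ∈ H i) ∧
      ∀ h' : ι → S, (∀ i, h' i ∈ H i) → Φ (f ∘ h') ≤ Φ (f ∘ h) := by
  obtain ⟨v, hv, hvmax⟩ := Set.exists_max_image (Set.univ.pi fun i => f '' H i) Φ
    (Set.Finite.pi hfin) (Set.univ_pi_nonempty_iff.mpr fun i => (hne i).image f)
  choose h hH hhv using fun i => hv i (Set.mem_univ i)
  have hfh : f ∘ h = v := funext hhv
  exact ⟨h, hH, fun h' hH' => hfh ▸ hvmax _ fun i _ => ⟨h' i, hH' i, rfl⟩⟩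

section EmpiricalGame

variable {X ι : Type*} [Fintype ι]

lemma satInd_eq_zero_or_one (g : X → ℝ) (x : X × ℝ × ℝ) : satInd g x = 0 ∨ satInd g x = 1 := by
  unfold satInd
  split_ifs <;> simp

lemma nSat_eq_card (h : ι → X → ℝ) (x : X × ℝ × ℝ) :
    nSat h x = #{i | satInd (h i) x = 1} := by
  rw [nSat, card_filter, Nat.cast_sum]
  refine sum_congr rfl fun i _ => ?_
  rcases satInd_eq_zero_or_one (h i) x with h0 | h1 <;> simp [*]

lemma share_eq_harmonic_sub [DecidableEq ι] (h : ι → X → ℝ) (i : ι) (x : X × ℝ × ℝ) :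
    share h i x = (harmonic #{k | satInd (h k) x = 1} : ℝ)
      - harmonic #{k ∈ univ.erase i | satInd (h k) x = 1} := by
  have hsplit : #{k | satInd (h k) x = 1}
      = #{k ∈ univ.erase i | satInd (h k) x = 1} + if satInd (h i) x = 1 then 1 else 0 := by
    simp only [card_filter]
    rw [← sum_erase_add _ _ (mem_univ i)]
  rcases satInd_eq_zero_or_one (h i) x with h0 | h1
  · rw [hsplit, if_neg (by simp [h0]), add_zero, sub_self, share, h0, zero_div, ite_self]
  · rw [if_pos h1] at hsplit
    have hpos : nSat h x ≠ 0 := by rw [nSat_eq_card, hsplit]; positivity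
    rw [share, if_neg hpos, h1, nSat_eq_card, hsplit, harmonic_succ]
    push_cast
    ring

lemma share_update_sub_share [DecidableEq ι] (h : ι → X → ℝ) (i : ι) (g : X → ℝ)
    (x : X × ℝ × ℝ) :
    share (update h i g) i x - share h i x
      = (harmonic #{k | satInd (update h i g k) x = 1} : ℝ)
        - harmonic #{k | satInd (h k) x = 1} := by
  have hothers : {k ∈ univ.erase i | satInd (update h i g k) x = 1}
      = {k ∈ univ.erase i | satInd (h k) x = 1} :=
    filter_congr fun k hk => by rw [update_of_ne (ne_of_mem_erase hk)]
  rw [share_eq_harmonic_sub, share_eq_harmonic_sub, hothers]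
  ring

variable {m : ℕ}

noncomputable def satVector (z : Fin m → X × ℝ × ℝ) (g : X → ℝ) : Fin m → ℝ :=
  fun j => satInd g (z j)

noncomputable def satPotential (v : ι → Fin m → ℝ) : ℝ :=
  (1 / m) * ∑ j, (harmonic #{i | v i j = 1} : ℝ)

lemma empPayoff_update_sub_empPayoff [DecidableEq ι] (z : Fin m → X × ℝ × ℝ)
    (h : ι → X → ℝ) (i : ι) (g : X → ℝ) :
    empPayoff z i (update h i g) - empPayoff z i h
      = satPotential (satVector z ∘ update h i g) - satPotential (satVector z ∘ h) := by
  simp only [empPayoff, satPotential, ← mul_sub, ← sum_sub_distrib, share_update_sub_share]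
  rfl

end EmpiricalGame

theorem stmt_9_general {X : Type*} {ι : Type*} [Fintype ι] [DecidableEq ι] {m : ℕ}
    (z : Fin m → X × ℝ × ℝ)
    (H : ι → Set (X → ℝ)) (hne : ∀ i, (H i).Nonempty)
    (hfin : ∀ i, (Set.image (fun g : X → ℝ => fun j : Fin m => satInd g (z j))
      (H i)).Finite) :
    ∃ h : ι → X → ℝ, (∀ i, h i ∈ H i) ∧
      ∀ (i : ι), ∀ g ∈ H i, empPayoff z i (Function.update h i g) ≤ empPayoff z i h := by
  obtain ⟨h, hH, hmax⟩ :=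
    exists_forall_comp_le_of_finite_image (satVector z) H hne hfin satPotential
  refine ⟨h, hH, fun i g hg => ?_⟩
  have hdev := hmax (update h i g) ((forall_update_iff h fun k s => s ∈ H k).mpr
    ⟨hg, fun k _ => hH k⟩)
  rw [← sub_nonpos, empPayoff_update_sub_empPayoff]
  exact sub_nonpos.mpr hdev

/-- Every empirical game possesses a pure Nash equilibrium, provided for each
player the set of distinct indicator behaviors of her strategies on the sample
is finite. -/
theorem stmt_9 {X : Type*} {ι : Type*} [Fintype ι] [DecidableEq ι] {m : ℕ}
    (z : Fin m → X × ℝ × ℝ) (ht : ∀ j, 0 ≤ (z j).2.2)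
    (H : ι → Set (X → ℝ)) (hne : ∀ i, (H i).Nonempty)
    (hfin : ∀ i, (Set.image (fun g : X → ℝ => fun j : Fin m => satInd g (z j))
      (H i)).Finite) :
    ∃ h : ι → X → ℝ, (∀ i, h i ∈ H i) ∧
      ∀ (i : ι), ∀ g ∈ H i, empPayoff z i (Function.update h i g) ≤ empPayoff z i h :=
  stmt_9_general z H hne hfin
end

section
/- Let H be a class of real-valued functions on X with pseudo-dimension d < ∞, and let F = { (x,y,t) ↦ 1[|h(x) − y| ≤ t] : h ∈ H }. Then VCdim(F) ≤ 10d. -/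
/-- `H` pseudo-shatters the points `x₁, …, x_m`. -/
def PShatters {X : Type*} (H : Set (X → ℝ)) {m : ℕ} (x : Fin m → X) : Prop :=
  ∃ r : Fin m → ℝ, ∀ b : Fin m → Bool, ∃ h ∈ H, ∀ j,
    if b j then r j < h (x j) else h (x j) < r j

/-- Pseudo-dimension: the largest `m` such that some `m`-tuple is pseudo-shattered. -/
noncomputable def pdim {X : Type*} (H : Set (X → ℝ)) : ℕ∞ :=
  ⨆ (m : ℕ) (_ : ∃ x : Fin m → X, PShatters H x), (m : ℕ∞)

/-- A class of binary functions shatters the points `s₁, …, s_m`. -/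
def BShatters {W : Type*} (C : Set (W → Bool)) {m : ℕ} (s : Fin m → W) : Prop :=
  ∀ b : Fin m → Bool, ∃ f ∈ C, ∀ j, f (s j) = b j

/-- VC dimension: the largest `m` such that some `m`-tuple is shattered. -/
noncomputable def vcDim {W : Type*} (C : Set (W → Bool)) : ℕ∞ :=
  ⨆ (m : ℕ) (_ : ∃ s : Fin m → W, BShatters C s), (m : ℕ∞)

/-- The class `G≥ = {(x,r) ↦ 1[h(x) ≥ r] : h ∈ H}`. -/
def Gge {X : Type*} (H : Set (X → ℝ)) : Set (X × ℝ → Bool) :=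
  {f | ∃ h ∈ H, ∀ p : X × ℝ, (f p = true ↔ p.2 ≤ h p.1)}

/-- The class `G≤ = {(x,r) ↦ 1[h(x) ≤ r] : h ∈ H}`. -/
def Gle {X : Type*} (H : Set (X → ℝ)) : Set (X × ℝ → Bool) :=
  {f | ∃ h ∈ H, ∀ p : X × ℝ, (f p = true ↔ h p.1 ≤ p.2)}

/-- The induced class `F = {(x,y,t) ↦ 1[|h(x) − y| ≤ t] : h ∈ H}`. -/
def indClass {X : Type*} (H : Set (X → ℝ)) : Set (X × ℝ × ℝ → Bool) :=
  {f | ∃ h ∈ H, ∀ z : X × ℝ × ℝ, (f z = true ↔ |h z.1 - z.2.1| ≤ z.2.2)}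

/-- Growth function of a class of binary functions. -/
noncomputable def growth {W : Type*} (C : Set (W → Bool)) (m : ℕ) : ℕ :=
  ⨆ S : Fin m → W, Nat.card {v : Fin m → Bool | ∃ f ∈ C, ∀ j, f (S j) = v j}



open Finset

lemma nsum_le (m d : ℕ) (hdm : d ≤ m) : 9^(m-d) * ∑ k ∈ Iic d, m.choose k ≤ 10^m := by
  have h1 : 9^(m-d) * ∑ k ∈ Iic d, m.choose k ≤ ∑ k ∈ Iic d, m.choose k * 9^(m-k) := by
    rw [Finset.mul_sum]
    apply sum_le_sum
    intro k hk
    simp only [mem_Iic] at hk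
    rw [mul_comm]
    exact Nat.mul_le_mul_left _ (Nat.pow_le_pow_right (by norm_num) (by omega))
  have h2 : ∑ k ∈ Iic d, m.choose k * 9^(m-k) ≤ ∑ k ∈ range (m+1), m.choose k * 9^(m-k) := by
    apply sum_le_sum_of_subset
    intro k hk; simp only [mem_Iic, mem_range] at *; omega
  have h3 : ∑ k ∈ range (m+1), m.choose k * 9^(m-k) = 10^m := by
    have h := add_pow (1:ℕ) 9 m
    norm_num at h
    rw [h]
    apply sum_congr rfl; intro k _; ring
  omega

lemma n2 (d : ℕ) : 81^d * 100^(10*d+1) < 162^(10*d+1) := by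
  induction d with
  | zero => norm_num
  | succ n ih =>
    have h10 : (81:ℕ) * 100^10 ≤ 162^10 := by norm_num
    calc 81^(n+1) * 100^(10*(n+1)+1) = (81 * 100^10) * (81^n * 100^(10*n+1)) := by ring
      _ ≤ 162^10 * (81^n * 100^(10*n+1)) := Nat.mul_le_mul_right _ h10
      _ < 162^10 * 162^(10*n+1) := mul_lt_mul_of_pos_left ih (by positivity)
      _ = 162^(10*(n+1)+1) := by ring

lemma numeric (d m : ℕ) (hm : 10*d+1 ≤ m) : (∑ k ∈ Iic d, m.choose k)^2 < 2^m := by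
  have hdm : d ≤ m := by omega
  set T := ∑ k ∈ Iic d, m.choose k with hT
  have h1 := nsum_le m d hdm
  have h2 : T^2 * 81^(m-d) ≤ 100^m := by
    calc T^2 * 81^(m-d) = (9^(m-d) * T) * (9^(m-d) * T) := by
          rw [show (81:ℕ) = 9*9 from rfl, mul_pow]; ring
      _ ≤ 10^m * 10^m := Nat.mul_le_mul h1 h1
      _ = 100^m := by rw [← mul_pow]; norm_num
  have h3 : 100^m * 81^d < 162^m := by
    obtain ⟨e, rfl⟩ : ∃ e, m = 10*d+1+e := ⟨m-(10*d+1), by omega⟩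
    calc 100^(10*d+1+e) * 81^d = (81^d * 100^(10*d+1)) * 100^e := by ring
      _ < 162^(10*d+1) * 100^e := mul_lt_mul_of_pos_right (n2 d) (by positivity)
      _ ≤ 162^(10*d+1) * 162^e := Nat.mul_le_mul_left _ (Nat.pow_le_pow_left (by norm_num) e)
      _ = 162^(10*d+1+e) := by ring
  have h4 : T^2 * 81^m < 2^m * 81^m := by
    calc T^2 * 81^m = T^2 * 81^(m-d) * 81^d := by rw [mul_assoc, ← pow_add]; congr 2; omega
      _ ≤ 100^m * 81^d := Nat.mul_le_mul_right _ h2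
      _ < 162^m := h3
      _ = 2^m * 81^m := by rw [← mul_pow]; norm_num
  exact Nat.lt_of_mul_lt_mul_right h4

lemma gge_shatters {X : Type*} {H : Set (X → ℝ)} {k : ℕ} {s : Fin k → X × ℝ}
    (hs : BShatters (Gge H) s) : PShatters H (fun j => (s j).1) := by
  classical
  choose f hf hfs using hs
  choose h hH hiff using hf
  have key : ∀ b (j : Fin k), b j = true ↔ (s j).2 ≤ h b (s j).1 := by
    intro b j; rw [← hfs b j]; exact hiff b (s j)
  have hne : ∀ j : Fin k, (univ.filter fun c : Fin k → Bool => c j = false).Nonempty :=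
    fun j => ⟨fun _ => false, by simp⟩
  set M : Fin k → ℝ := fun j =>
    (univ.filter fun c : Fin k → Bool => c j = false).sup' (hne j) (fun c => h c (s j).1) with hM
  have hMlt : ∀ j, M j < (s j).2 := by
    intro j
    rw [hM]
    apply Finset.sup'_lt_iff (hne j) |>.2
    intro c hc
    simp only [mem_filter, mem_univ, true_and] at hc
    by_contra hcon
    push_neg at hcon
    have := (key c j).2 hcon
    rw [this] at hc; exact Bool.noConfusion hc
  refine ⟨fun j => ((s j).2 + M j) / 2, fun b => ⟨h b, hH b, fun j => ?_⟩⟩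
  rcases hbj : b j with _ | _
  · simp only [hbj]
    norm_num
    have hle : h b (s j).1 ≤ M j := by
      rw [hM]
      exact Finset.le_sup' (fun c => h c (s j).1) (by simp [hbj])
    have := hMlt j
    linarith
  · simp only [hbj]
    norm_num
    have hge : (s j).2 ≤ h b (s j).1 := (key b j).1 hbj
    have := hMlt j
    linarith

lemma gle_shatters {X : Type*} {H : Set (X → ℝ)} {k : ℕ} {s : Fin k → X × ℝ}
    (hs : BShatters (Gle H) s) : PShatters H (fun j => (s j).1) := by
  classical
  choose f hf hfs using hs
  choose h hH hiff using hf
  have key : ∀ b (j : Fin k), b j = true ↔ h b (s j).1 ≤ (s j).2 := by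
    intro b j; rw [← hfs b j]; exact hiff b (s j)
  have hne : ∀ j : Fin k, (univ.filter fun c : Fin k → Bool => c j = false).Nonempty :=
    fun j => ⟨fun _ => false, by simp⟩
  set M : Fin k → ℝ := fun j =>
    (univ.filter fun c : Fin k → Bool => c j = false).inf' (hne j) (fun c => h c (s j).1) with hM
  have hMgt : ∀ j, (s j).2 < M j := by
    intro j
    rw [hM]
    apply Finset.lt_inf'_iff (hne j) |>.2
    intro c hc
    simp only [mem_filter, mem_univ, true_and] at hc
    by_contra hcon
    push_neg at hcon
    have := (key c j).2 hcon
    rw [this] at hc; exact Bool.noConfusion hc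
  refine ⟨fun j => ((s j).2 + M j) / 2, fun b => ⟨h (fun i => !(b i)), hH _, fun j => ?_⟩⟩
  rcases hbj : b j with _ | _
  · simp only [hbj]
    norm_num
    have : h (fun i => !(b i)) (s j).1 ≤ (s j).2 := (key _ j).1 (by simp [hbj])
    have := hMgt j
    linarith
  · simp only [hbj]
    norm_num
    have hge : M j ≤ h (fun i => !(b i)) (s j).1 := by
      rw [hM]
      exact Finset.inf'_le (fun c => h c (s j).1) (by simp [hbj])
    have := hMgt j
    linarith

lemma sauer_patterns {W : Type*} (C : Set (W → Bool)) (d m : ℕ)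
    (hC : ∀ k (s : Fin k → W), BShatters C s → k ≤ d) (S : Fin m → W) :
    Nat.card {v : Fin m → Bool | ∃ f ∈ C, ∀ j, f (S j) = v j} ≤ ∑ k ∈ Iic d, m.choose k := by
  classical
  set P : Set (Fin m → Bool) := {v | ∃ f ∈ C, ∀ j, f (S j) = v j} with hP
  have hPfin : P.Finite := Set.toFinite _
  set Φ : (Fin m → Bool) → Finset (Fin m) := fun v => univ.filter fun j => v j = true with hΦ
  have hinj : Function.Injective Φ := by
    intro v w hvw
    funext j
    have h1 : j ∈ Φ v ↔ j ∈ Φ w := by rw [hvw]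
    simp only [hΦ, mem_filter, mem_univ, true_and] at h1
    cases hv : v j <;> cases hw : w j <;> simp_all
  set 𝒜 : Finset (Finset (Fin m)) := hPfin.toFinset.image Φ with h𝒜
  have hcard : Nat.card P = 𝒜.card := by
    rw [h𝒜, Finset.card_image_of_injective _ hinj, Set.Finite.card_toFinset,
      Nat.card_eq_fintype_card]
  have hsub : 𝒜.shatterer ⊆ (Iic d).biUnion fun k => powersetCard k (univ : Finset (Fin m)) := by
    intro t ht
    rw [mem_shatterer] at ht
    have htcard : t.card ≤ d := by
      set e := t.orderIsoOfFin rfl with he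
      apply hC t.card (fun i => S (e i))
      intro b
      set u : Finset (Fin m) := (univ.filter fun i => b i = true).image (fun i => (e i : Fin m))
        with hu
      have hut : u ⊆ t := by
        intro j hj
        simp only [hu, mem_image, mem_filter, mem_univ, true_and] at hj
        obtain ⟨i, _, rfl⟩ := hj
        exact (e i).2
      obtain ⟨A, hA𝒜, hAu⟩ := ht hut
      simp only [h𝒜, mem_image, Set.Finite.mem_toFinset] at hA𝒜
      obtain ⟨v, hvP, rfl⟩ := hA𝒜
      obtain ⟨f, hfC, hfv⟩ := hvP
      refine ⟨f, hfC, fun i => ?_⟩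
      have hei : ((e i : Fin m) ∈ u) ↔ b i = true := by
        simp only [hu, mem_image, mem_filter, mem_univ, true_and]
        constructor
        · rintro ⟨i', hi', hii⟩
          have : (fun i => (e i : Fin m)) i' = (fun i => (e i : Fin m)) i := hii
          have hie : Function.Injective (fun i => (e i : Fin m)) :=
            Subtype.coe_injective.comp e.injective
          rwa [hie this] at hi'
        · intro hb; exact ⟨i, hb, rfl⟩
      have h2 : (e i : Fin m) ∈ t := (e i).2
      have h3 : v (e i : Fin m) = b i := by
        have h4 : ((e i : Fin m) ∈ Φ v) ↔ b i = true := by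
          rw [← hei]
          constructor
          · intro hv; rw [← hAu]; exact mem_inter.2 ⟨h2, hv⟩
          · intro hv; exact (mem_inter.1 (hAu ▸ hv)).2
        simp only [hΦ, mem_filter, mem_univ, true_and] at h4
        cases hb : b i <;> cases hv : v (e i : Fin m) <;> simp_all
      rw [hfv, h3]
    exact mem_biUnion.2 ⟨t.card, mem_Iic.2 htcard, mem_powersetCard_univ.2 rfl⟩
  calc Nat.card P = 𝒜.card := hcard
    _ ≤ 𝒜.shatterer.card := Finset.card_le_card_shatterer 𝒜
    _ ≤ ((Iic d).biUnion fun k => powersetCard k (univ : Finset (Fin m))).card :=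
        Finset.card_le_card hsub
    _ ≤ ∑ k ∈ Iic d, (powersetCard k (univ : Finset (Fin m))).card := Finset.card_biUnion_le
    _ = ∑ k ∈ Iic d, m.choose k := by
        apply sum_congr rfl; intro k _
        rw [Finset.card_powersetCard, Finset.card_univ, Fintype.card_fin]

lemma two_pow_le {X : Type*} (H : Set (X → ℝ)) {m : ℕ} (s : Fin m → X × ℝ × ℝ)
    (hs : BShatters (indClass H) s) :
    2 ^ m ≤
      Nat.card {v : Fin m → Bool | ∃ f ∈ Gge H, ∀ j,
          f ((s j).1, (s j).2.1 - (s j).2.2) = v j} *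
      Nat.card {v : Fin m → Bool | ∃ f ∈ Gle H, ∀ j,
          f ((s j).1, (s j).2.1 + (s j).2.2) = v j} := by
  classical
  choose f hf hfs using hs
  choose h hH hiff using hf
  set P1 : Set (Fin m → Bool) := {v | ∃ f ∈ Gge H, ∀ j,
    f ((s j).1, (s j).2.1 - (s j).2.2) = v j} with hP1
  set P2 : Set (Fin m → Bool) := {v | ∃ f ∈ Gle H, ∀ j,
    f ((s j).1, (s j).2.1 + (s j).2.2) = v j} with hP2
  have key : ∀ b (j : Fin m), b j = true ↔
      ((s j).2.1 - (s j).2.2 ≤ h b (s j).1 ∧ h b (s j).1 ≤ (s j).2.1 + (s j).2.2) := by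
    intro b j
    rw [← hfs b j, hiff b (s j), abs_sub_le_iff]
    constructor
    · rintro ⟨h1, h2⟩; constructor <;> linarith
    · rintro ⟨h1, h2⟩; constructor <;> linarith
  have h1 : ∀ b, (fun j => decide ((s j).2.1 - (s j).2.2 ≤ h b (s j).1)) ∈ P1 := by
    intro b
    refine ⟨fun p => decide (p.2 ≤ h b p.1), ⟨h b, hH b, fun p => by simp⟩, fun j => rfl⟩
  have h2 : ∀ b, (fun j => decide (h b (s j).1 ≤ (s j).2.1 + (s j).2.2)) ∈ P2 := by
    intro b
    refine ⟨fun p => decide (h b p.1 ≤ p.2), ⟨h b, hH b, fun p => by simp⟩, fun j => rfl⟩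
  set Φ : (Fin m → Bool) → P1 × P2 := fun b => (⟨_, h1 b⟩, ⟨_, h2 b⟩) with hΦ
  have hrec : ∀ b (j : Fin m),
      b j = (decide ((s j).2.1 - (s j).2.2 ≤ h b (s j).1)
        && decide (h b (s j).1 ≤ (s j).2.1 + (s j).2.2)) := by
    intro b j
    rcases hbj : b j with _ | _
    · have hna : ¬((s j).2.1 - (s j).2.2 ≤ h b (s j).1 ∧
          h b (s j).1 ≤ (s j).2.1 + (s j).2.2) := by
        intro hc
        have := (key b j).2 hc
        rw [hbj] at this
        exact Bool.noConfusion this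
      rcases not_and_or.1 hna with hA | hA <;> simp [hA]
    · have hk := (key b j).1 hbj
      simp [hk.1, hk.2]
  have hΦinj : Function.Injective Φ := by
    intro b b' hbb
    have e1 : (fun j => decide ((s j).2.1 - (s j).2.2 ≤ h b (s j).1)) =
        (fun j => decide ((s j).2.1 - (s j).2.2 ≤ h b' (s j).1)) :=
      congrArg (fun p => (p.1 : Fin m → Bool)) hbb
    have e2 : (fun j => decide (h b (s j).1 ≤ (s j).2.1 + (s j).2.2)) =
        (fun j => decide (h b' (s j).1 ≤ (s j).2.1 + (s j).2.2)) :=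
      congrArg (fun p => (p.2 : Fin m → Bool)) hbb
    funext j
    rw [hrec b j, hrec b' j, congrFun e1 j, congrFun e2 j]
  calc 2 ^ m = Nat.card (Fin m → Bool) := by
        simp [Nat.card_eq_fintype_card]
    _ ≤ Nat.card (P1 × P2) := Nat.card_le_card_of_injective Φ hΦinj
    _ = Nat.card P1 * Nat.card P2 := Nat.card_prod _ _

lemma pshatters_le {X : Type*} {H : Set (X → ℝ)} {d m : ℕ} (hd : pdim H = (d : ℕ∞))
    {x : Fin m → X} (hx : PShatters H x) : m ≤ d := by
  have h1 : (m : ℕ∞) ≤ pdim H :=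
    le_iSup₂ (f := fun m (_ : ∃ x : Fin m → X, PShatters H x) => (m : ℕ∞)) m ⟨x, hx⟩
  rw [hd] at h1
  exact_mod_cast h1

/-- If `Pdim(H) = d < ∞` then `VCdim(F) ≤ 10d`. -/
theorem stmt_13 {X : Type*} (H : Set (X → ℝ)) (d : ℕ) (hd : pdim H = (d : ℕ∞)) :
    vcDim (indClass H) ≤ (10 * d : ℕ∞) := by
  have key : ∀ m : ℕ, (∃ s : Fin m → X × ℝ × ℝ, BShatters (indClass H) s) → m ≤ 10 * d := by
    intro m hex
    obtain ⟨s, hs⟩ := hex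
    by_contra hm
    push_neg at hm
    have hge : ∀ k (t : Fin k → X × ℝ), BShatters (Gge H) t → k ≤ d :=
      fun k t ht => pshatters_le hd (gge_shatters ht)
    have hle : ∀ k (t : Fin k → X × ℝ), BShatters (Gle H) t → k ≤ d :=
      fun k t ht => pshatters_le hd (gle_shatters ht)
    have c1 := sauer_patterns (Gge H) d m hge (fun j => ((s j).1, (s j).2.1 - (s j).2.2))
    have c2 := sauer_patterns (Gle H) d m hle (fun j => ((s j).1, (s j).2.1 + (s j).2.2))
    have c3 := two_pow_le H s hs
    have c4 := numeric d m hm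
    have c5 : 2 ^ m ≤ (∑ k ∈ Finset.Iic d, m.choose k) ^ 2 := by
      calc 2 ^ m ≤ _ := c3
        _ ≤ (∑ k ∈ Finset.Iic d, m.choose k) * (∑ k ∈ Finset.Iic d, m.choose k) :=
            Nat.mul_le_mul c1 c2
        _ = (∑ k ∈ Finset.Iic d, m.choose k) ^ 2 := (sq _).symm
    exact absurd (lt_of_le_of_lt c5 c4) (lt_irrefl _)
  rw [_root_.vcDim]
  apply iSup_le
  intro m
  apply iSup_le
  intro hm
  calc (m : ℕ∞) ≤ ((10 * d : ℕ) : ℕ∞) := by exact_mod_cast key m hm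
    _ = (10 * d : ℕ∞) := by push_cast; ring
end

section
/- For every natural number d ≥ 1, ∑_{j=0}^{d} C(10d, j) < 2^{5d}. -/
/-!
Chernoff-type bound: in the binomial expansion of `(1 + 9) ^ (10 * d)`, every term with `j ≤ d`
carries the weight `9 ^ (10 * d - j) ≥ 9 ^ (9 * d)`, so `9 ^ (9 * d) * ∑_{j ≤ d} C(10d, j) ≤ 10 ^ (10 * d)`.
It remains that `10 ^ 10 < 2 ^ 5 * 9 ^ 9`.
-/

open Finset

section OrderedSemiring

variable {R : Type*} [CommSemiring R] [PartialOrder R] [IsOrderedRing R] {a b : R}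

theorem pow_mul_pow_sub_le_pow_mul_pow_sub (ha : 0 ≤ a) (hab : a ≤ b) {j k n : ℕ}
    (hjk : j ≤ k) (hkn : k ≤ n) : a ^ k * b ^ (n - k) ≤ a ^ j * b ^ (n - j) := by
  have hb : 0 ≤ b := ha.trans hab
  obtain ⟨i, rfl⟩ := Nat.exists_eq_add_of_le hjk
  calc a ^ (j + i) * b ^ (n - (j + i)) = a ^ j * (a ^ i * b ^ (n - (j + i))) := by ring
    _ ≤ a ^ j * (b ^ i * b ^ (n - (j + i))) := by gcongr
    _ = a ^ j * b ^ (n - j) := by rw [← pow_add]; congr 2; omega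

theorem sum_range_choose_mul_le_add_pow (ha : 0 ≤ a) (hab : a ≤ b) {k n : ℕ} (hkn : k ≤ n) :
    (∑ j ∈ range (k + 1), (n.choose j : R)) * (a ^ k * b ^ (n - k)) ≤ (a + b) ^ n := by
  have hb : 0 ≤ b := ha.trans hab
  rw [add_pow, sum_mul]
  calc ∑ j ∈ range (k + 1), (n.choose j : R) * (a ^ k * b ^ (n - k))
      ≤ ∑ j ∈ range (k + 1), a ^ j * b ^ (n - j) * n.choose j := by
        refine sum_le_sum fun j hj => ?_
        rw [mul_comm]
        exact mul_le_mul_of_nonneg_right (pow_mul_pow_sub_le_pow_mul_pow_sub ha hab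
          (Nat.lt_succ_iff.mp (mem_range.mp hj)) hkn) (Nat.cast_nonneg _)
    _ ≤ ∑ j ∈ range (n + 1), a ^ j * b ^ (n - j) * n.choose j :=
        sum_le_sum_of_subset_of_nonneg (range_subset_range.mpr (by omega))
          fun _ _ _ => by positivity

end OrderedSemiring

theorem stmt_14 (d : ℕ) (hd : 1 ≤ d) :
    ∑ j ∈ Finset.range (d + 1), Nat.choose (10 * d) j < 2 ^ (5 * d) := by
  have hsum := sum_range_choose_mul_le_add_pow (R := ℕ) (a := 1) (b := 9) zero_le_one
    (by norm_num) (show d ≤ 10 * d by omega)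
  simp only [Nat.cast_id, one_pow, one_mul, Nat.reduceAdd,
    show 10 * d - d = 9 * d by omega] at hsum
  have hlt : 10 ^ (10 * d) < 2 ^ (5 * d) * 9 ^ (9 * d) := by
    simp only [pow_mul, ← mul_pow]
    exact Nat.pow_lt_pow_left (by norm_num) (by omega)
  exact Nat.lt_of_mul_lt_mul_right (hsum.trans_lt hlt)
end
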